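/- Let G = G^1 ⊗ … ⊗ G^n and F = F^1 ⊗ … ⊗ F^n be product probability distributions on [0, x̄]^n with continuous marginal CDFs, and suppose sup_x |F^i(x) − G^i(x)| ≤ Δ for every i. Let p* ∈ ℝ^n satisfy p*_i > 0 for all i and Σ_i p*_i = 1, and suppose λ, λ* ∈ ℝ^n satisfy p_j(G, λ) = p*_j for all j and p_j(F, λ*) = p*_j for all j. Then for every j, P_{X∼F}( X ∈ L_j(λ*) \\ L_j(λ) ) ≤ nΔ and P_{X∼F}( X ∈ L_j(λ) \\ L_j(λ*) ) ≤ nΔ. -/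

import Mathlib

open MeasureTheory ProbabilityTheory Real

noncomputable section

/-- CDF of a measure on `ℝ`. -/
def mcdf (μ : Measure ℝ) (x : ℝ) : ℝ := (μ (Set.Iic x)).toReal

/-- The Laguerre cell `L_i(λ) = {x ∈ [0,x̄]^n : x_i + λ_i > x_j + λ_j ∀ j ≠ i}`. -/
def laguerre {n : ℕ} (xbar : ℝ) (lam : Fin n → ℝ) (i : Fin n) : Set (Fin n → ℝ) :=
  {x | (∀ j, x j ∈ Set.Icc (0 : ℝ) xbar) ∧ ∀ j, j ≠ i → x j + lam j < x i + lam i}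

/-- `p_j(𝐅, λ) = P_{X∼𝐅}(X ∈ L_j(λ))`. -/
def pAlloc {n : ℕ} (xbar : ℝ) (μ : Measure (Fin n → ℝ)) (lam : Fin n → ℝ) (j : Fin n) : ℝ :=
  (μ (laguerre xbar lam j)).toReal
/-!
Write `d = λ - λ*` and `T = {k | d_j < d_k}`. Comparing which cell a point lies in under the two
policies shows that, up to null sets, `L_j(λ*) \ L_j(λ)` lies in `⋃_{k ∈ T} L_k(λ)` and is disjoint
from `⋃_{k ∈ T} L_k(λ*) ⊆ ⋃_{k ∈ T} L_k(λ)`, so its `F`-mass is at most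
`F(⋃_T L_k(λ)) - F(⋃_T L_k(λ*))`. Both policies meet the same targets, so
`F(⋃_T L_k(λ*)) = G(⋃_T L_k(λ))`, and it remains to see `F(A) ≤ G(A) + nΔ` for a union `A` of
cells (the second claim is symmetric, with `F` and `G` exchanged). This is a hybrid argument:
swap the marginals one at a time. By Fubini each swap costs at most `Δ`, since up to ties, which
are null because the marginals are atomless, the coordinate sections of `A` are half-lines, on
which the CDFs are `Δ`-close.
-/

open Set Filter Function
open scoped ENNReal

lemma IsLowerSet.exists_Iio_subset_subset_Iic {H : Set ℝ} (hH : IsLowerSet H)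
    (h₀ : H.Nonempty) (h₁ : H ≠ univ) : ∃ a, Iio a ⊆ H ∧ H ⊆ Iic a := by
  obtain ⟨c, hc⟩ := (ne_univ_iff_exists_notMem H).mp h₁
  have hbdd : BddAbove H := ⟨c, fun t ht => le_of_not_gt fun h => hc (hH h.le ht)⟩
  refine ⟨sSup H, fun t ht => ?_, fun t ht => le_csSup hbdd ht⟩
  obtain ⟨s, hs, hts⟩ := exists_lt_of_lt_csSup h₀ ht
  exact hH hts.le hs

lemma nullSingletonClass_of_continuous_mcdf (μ : Measure ℝ) [IsProbabilityMeasure μ]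
    (h : Continuous (mcdf μ)) : NullSingletonClass μ := by
  have hcdf : ⇑(cdf μ) = mcdf μ := funext (cdf_eq_real μ)
  refine ⟨fun a => ?_⟩
  have hleft : leftLim (cdf μ) a = cdf μ a :=
    leftLim_eq_of_tendsto (hcdf ▸ (h.tendsto a).mono_left nhdsWithin_le_nhds)
  rw [← measure_cdf μ, StieltjesFunction.measure_singleton, hleft, sub_self, ENNReal.ofReal_zero]

section CDFClose

variable {μ ν : Measure ℝ} [IsProbabilityMeasure μ] [IsProbabilityMeasure ν] {Δ : ℝ}

lemma measureReal_le_add_of_isLowerSet [NullSingletonClass ν]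
    (hclose : ∀ x, |mcdf μ x - mcdf ν x| ≤ Δ) {H : Set ℝ} (hH : IsLowerSet H) :
    μ.real H ≤ ν.real H + Δ := by
  have hΔ : 0 ≤ Δ := (abs_nonneg _).trans (hclose 0)
  rcases H.eq_empty_or_nonempty with rfl | h₀
  · simpa using hΔ
  rcases eq_or_ne H univ with rfl | h₁
  · simpa using hΔ
  obtain ⟨a, hlo, hhi⟩ := hH.exists_Iio_subset_subset_Iic h₀ h₁
  calc μ.real H ≤ μ.real (Iic a) := measureReal_mono hhi
    _ = mcdf μ a := rfl
    _ ≤ mcdf ν a + Δ := by linarith [(abs_le.mp (hclose a)).2]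
    _ = ν.real (Iio a) + Δ := by rw [measureReal_congr Iio_ae_eq_Iic]; rfl
    _ ≤ ν.real H + Δ := by linarith [measureReal_mono (μ := ν) hlo]

lemma measureReal_le_add_of_isUpperSet [NullSingletonClass μ]
    (hclose : ∀ x, |mcdf μ x - mcdf ν x| ≤ Δ) {H : Set ℝ} (hH : IsUpperSet H) :
    μ.real H ≤ ν.real H + Δ := by
  have hm : MeasurableSet H := hH.ordConnected.measurableSet
  have := measureReal_le_add_of_isLowerSet (μ := ν) (ν := μ)
    (fun x => by rw [abs_sub_comm]; exact hclose x) hH.compl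
  rw [probReal_compl_eq_one_sub hm, probReal_compl_eq_one_sub hm] at this
  linarith

lemma measure_le_add_of_isLowerSet_or_isUpperSet [NullSingletonClass μ] [NullSingletonClass ν]
    (hclose : ∀ x, |mcdf μ x - mcdf ν x| ≤ Δ) {H : Set ℝ} (hH : IsLowerSet H ∨ IsUpperSet H) :
    μ H ≤ ν H + ENNReal.ofReal Δ := by
  have hreal : μ.real H ≤ ν.real H + Δ := hH.elim
    (measureReal_le_add_of_isLowerSet hclose) (measureReal_le_add_of_isUpperSet hclose)
  calc μ H = ENNReal.ofReal (μ.real H) := (ofReal_measureReal (measure_ne_top μ H)).symm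
    _ ≤ ENNReal.ofReal (ν.real H + Δ) := ENNReal.ofReal_le_ofReal hreal
    _ ≤ ENNReal.ofReal (ν.real H) + ENNReal.ofReal Δ := ENNReal.ofReal_add_le
    _ = ν H + ENNReal.ofReal Δ := by rw [ofReal_measureReal (measure_ne_top ν H)]

end CDFClose

lemma Measure.pi_apply_eq_lintegral_insertNth {m : ℕ} {α : Fin (m + 1) → Type*}
    [∀ j, MeasurableSpace (α j)] (μ : ∀ j, Measure (α j)) [∀ j, SigmaFinite (μ j)]
    (i : Fin (m + 1)) {A : Set (∀ j, α j)} (hA : MeasurableSet A) :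
    Measure.pi μ A =
      ∫⁻ y, μ i {t | i.insertNth t y ∈ A} ∂(Measure.pi fun j => μ (i.succAbove j)) := by
  have he := (measurePreserving_piFinSuccAbove μ i).symm
  rw [← he.measure_preimage_equiv A,
    Measure.prod_apply_symm ((MeasurableEquiv.piFinSuccAbove α i).symm.measurable hA)]
  rfl

lemma pi_le_pi_add_of_eqOn_compl_singleton {n : ℕ} {Δ : ℝ} (μ ν : Fin n → Measure ℝ)
    [∀ j, IsProbabilityMeasure (μ j)] [∀ j, IsProbabilityMeasure (ν j)] (i : Fin n)
    (hagree : ∀ j, j ≠ i → μ j = ν j) [NullSingletonClass (μ i)] [NullSingletonClass (ν i)]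
    (hclose : ∀ x, |mcdf (μ i) x - mcdf (ν i) x| ≤ Δ)
    {A : Set (Fin n → ℝ)} (hA : MeasurableSet A)
    (hsec : ∀ x, IsLowerSet {t | update x i t ∈ A} ∨ IsUpperSet {t | update x i t ∈ A}) :
    Measure.pi μ A ≤ Measure.pi ν A + ENNReal.ofReal Δ := by
  obtain ⟨m, rfl⟩ : ∃ m, n = m + 1 := ⟨n - 1, by have := i.pos; omega⟩
  have hrest : (fun j => μ (i.succAbove j)) = fun j => ν (i.succAbove j) :=
    funext fun j => hagree _ (i.succAbove_ne j)
  have hsection : ∀ y : Fin m → ℝ,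
      μ i {t | i.insertNth t y ∈ A} ≤ ν i {t | i.insertNth t y ∈ A} + ENNReal.ofReal Δ := by
    intro y
    have := hsec (i.insertNth 0 y)
    simp only [Fin.update_insertNth] at this
    exact measure_le_add_of_isLowerSet_or_isUpperSet hclose this
  rw [Measure.pi_apply_eq_lintegral_insertNth μ i hA,
    Measure.pi_apply_eq_lintegral_insertNth ν i hA, hrest]
  calc _ ≤ ∫⁻ y, (ν i {t | i.insertNth t y ∈ A} + ENNReal.ofReal Δ)
          ∂(Measure.pi fun j => ν (i.succAbove j)) := lintegral_mono hsection
    _ = _ := by rw [lintegral_add_right _ measurable_const, lintegral_const, measure_univ, mul_one]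

lemma pi_le_pi_add_of_monotone_sections {n : ℕ} {Δ : ℝ} (μ ν : Fin n → Measure ℝ)
    [∀ j, IsProbabilityMeasure (μ j)] [∀ j, IsProbabilityMeasure (ν j)]
    [∀ j, NullSingletonClass (μ j)] [∀ j, NullSingletonClass (ν j)]
    (hclose : ∀ j x, |mcdf (μ j) x - mcdf (ν j) x| ≤ Δ)
    {A : Set (Fin n → ℝ)} (hA : MeasurableSet A)
    (hsec : ∀ i x, IsLowerSet {t | update x i t ∈ A} ∨ IsUpperSet {t | update x i t ∈ A}) :
    Measure.pi μ A ≤ Measure.pi ν A + n * ENNReal.ofReal Δ := by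
  classical
  suffices ∀ s : Finset (Fin n),
      Measure.pi (s.piecewise μ ν) A ≤ Measure.pi ν A + s.card * ENNReal.ofReal Δ by
    simpa using this Finset.univ
  intro s
  induction s using Finset.induction_on with
  | empty => simp
  | @insert a s ha ih =>
    have _ : ∀ j, IsProbabilityMeasure (s.piecewise μ ν j) := fun j =>
      s.piecewise_cases μ ν (fun κ => IsProbabilityMeasure κ) inferInstance inferInstance
    have _ : ∀ j, IsProbabilityMeasure ((insert a s).piecewise μ ν j) := fun j =>
      (insert a s).piecewise_cases μ ν (fun κ => IsProbabilityMeasure κ) inferInstance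
        inferInstance
    have hins : (insert a s).piecewise μ ν a = μ a := Finset.piecewise_insert_self ..
    have hout : s.piecewise μ ν a = ν a := Finset.piecewise_eq_of_notMem _ _ _ ha
    have _ : NullSingletonClass ((insert a s).piecewise μ ν a) := hins ▸ inferInstance
    have _ : NullSingletonClass (s.piecewise μ ν a) := hout ▸ inferInstance
    calc Measure.pi ((insert a s).piecewise μ ν) A
        ≤ Measure.pi (s.piecewise μ ν) A + ENNReal.ofReal Δ :=
          pi_le_pi_add_of_eqOn_compl_singleton ((insert a s).piecewise μ ν) (s.piecewise μ ν) a
            (fun j hj => Finset.piecewise_insert_of_ne _ _ _ hj)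
            (by rw [hins, hout]; exact hclose a) hA (hsec a)
      _ ≤ Measure.pi ν A + s.card * ENNReal.ofReal Δ + ENNReal.ofReal Δ := by gcongr
      _ = Measure.pi ν A + (insert a s).card * ENNReal.ofReal Δ := by
          rw [Finset.card_insert_of_notMem ha]
          push_cast
          ring

lemma Measure.ae_pi_ne_add {n : ℕ} (μ : Fin n → Measure ℝ) [∀ j, SigmaFinite (μ j)]
    {j k : Fin n} [NullSingletonClass (μ k)] (hjk : j ≠ k) (c : ℝ) :
    ∀ᵐ x ∂Measure.pi μ, x k ≠ x j + c := by
  obtain ⟨m, rfl⟩ : ∃ m, n = m + 1 := ⟨n - 1, by have := k.pos; omega⟩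
  obtain ⟨j, rfl⟩ := Fin.exists_succAbove_eq hjk
  simp only [ae_iff, not_not]
  rw [Measure.pi_apply_eq_lintegral_insertNth μ k
    (measurableSet_eq_fun (by fun_prop) (by fun_prop))]
  simp only [mem_ofPred_eq, Fin.insertNth_apply_same, Fin.insertNth_apply_succAbove,
    ofPred_eq_eq_singleton, measure_singleton, lintegral_zero]

/-- Unlike `laguerre`, unions of these cells have exactly monotone coordinate sections; they agree
with unions of Laguerre cells up to null sets. -/
def weakLaguerre {n : ℕ} (lam : Fin n → ℝ) (k : Fin n) : Set (Fin n → ℝ) :=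
  {x | ∀ j, x j + lam j ≤ x k + lam k}

section Laguerre

variable {n : ℕ} {xbar : ℝ}

lemma laguerre_subset_weakLaguerre (lam : Fin n → ℝ) (k : Fin n) :
    laguerre xbar lam k ⊆ weakLaguerre lam k := by
  intro x hx j
  rcases eq_or_ne j k with rfl | hjk
  · rfl
  · exact (hx.2 j hjk).le

lemma exists_mem_weakLaguerre [NeZero n] (lam : Fin n → ℝ) (x : Fin n → ℝ) :
    ∃ k, x ∈ weakLaguerre lam k :=
  Finite.exists_max fun j => x j + lam j

lemma measurableSet_laguerre (lam : Fin n → ℝ) (k : Fin n) :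
    MeasurableSet (laguerre xbar lam k) := by
  simp only [laguerre, ofPred_and, ofPred_forall]
  refine (MeasurableSet.iInter fun j => measurable_pi_apply j measurableSet_Icc).inter
    (MeasurableSet.iInter fun j => MeasurableSet.iInter fun _ => measurableSet_lt ?_ ?_) <;>
  fun_prop

lemma isClosed_weakLaguerre (lam : Fin n → ℝ) (k : Fin n) : IsClosed (weakLaguerre lam k) := by
  simp only [weakLaguerre, ofPred_forall]
  exact isClosed_iInter fun j => isClosed_le (by fun_prop) (by fun_prop)

lemma disjoint_laguerre (lam : Fin n → ℝ) {k k' : Fin n} (h : k ≠ k') :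
    Disjoint (laguerre xbar lam k) (laguerre xbar lam k') :=
  disjoint_left.mpr fun _ h₁ h₂ => (h₁.2 k' h.symm).not_gt (h₂.2 k h)

lemma sub_lt_sub_of_mem_laguerre {a b : Fin n → ℝ} {k m : Fin n} (hkm : k ≠ m) {x : Fin n → ℝ}
    (ha : x ∈ laguerre xbar a m) (hb : x ∈ laguerre xbar b k) : a k - b k < a m - b m := by
  linarith [ha.2 k hkm, hb.2 m hkm.symm]

lemma isUpperSet_setOf_update_mem_biUnion_weakLaguerre (lam : Fin n → ℝ) {T : Finset (Fin n)}
    {i : Fin n} (hi : i ∈ T) (x : Fin n → ℝ) :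
    IsUpperSet {t | update x i t ∈ ⋃ k ∈ T, weakLaguerre lam k} := by
  intro t t' htt' ht
  simp only [mem_ofPred_eq, mem_iUnion, exists_prop, weakLaguerre] at ht ⊢
  obtain ⟨k, hk, hmax⟩ := ht
  have hmono : update x i t k ≤ update x i t' k := update_mono htt' k
  have hoff : ∀ j, j ≠ i → update x i t' j = update x i t j := fun j hji => by
    rw [update_of_ne hji, update_of_ne hji]
  by_cases hwin : update x i t' k + lam k ≤ t' + lam i
  · refine ⟨i, hi, fun j => ?_⟩
    rcases eq_or_ne j i with rfl | hji
    · rfl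
    · rw [update_self, hoff j hji]
      linarith [hmax j]
  · refine ⟨k, hk, fun j => ?_⟩
    rcases eq_or_ne j i with rfl | hji
    · rw [update_self]
      linarith
    · rw [hoff j hji]
      linarith [hmax j]

lemma isLowerSet_setOf_update_mem_biUnion_weakLaguerre (lam : Fin n → ℝ) {T : Finset (Fin n)}
    {i : Fin n} (hi : i ∉ T) (x : Fin n → ℝ) :
    IsLowerSet {t | update x i t ∈ ⋃ k ∈ T, weakLaguerre lam k} := by
  intro t t' htt' ht
  simp only [mem_ofPred_eq, mem_iUnion, exists_prop, weakLaguerre] at ht ⊢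
  obtain ⟨k, hk, hmax⟩ := ht
  have hki : k ≠ i := fun h => hi (h ▸ hk)
  refine ⟨k, hk, fun j => ?_⟩
  rw [update_of_ne hki] at hmax ⊢
  linarith [hmax j, (update_mono htt' : update x i t' ≤ update x i t) j]

end Laguerre

lemma measure_le_of_ae_subset_of_disjoint {α : Type*} [MeasurableSpace α] (ρ : Measure α)
    [IsFiniteMeasure ρ] {X P Q : Set α} {c : ℝ≥0∞} (hXP : X ≤ᵐ[ρ] P) (hQP : Q ≤ᵐ[ρ] P)
    (hXQ : Disjoint X Q) (hQ : MeasurableSet Q) (h : ρ P ≤ ρ Q + c) : ρ X ≤ c := by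
  have hunion : ρ X + ρ Q ≤ ρ Q + c :=
    calc ρ X + ρ Q = ρ (X ∪ Q) := (measure_union hXQ hQ).symm
      _ ≤ ρ P := measure_mono_ae (by simpa using hXP.union hQP)
      _ ≤ ρ Q + c := h
  rwa [add_comm, ENNReal.add_le_add_iff_left (measure_ne_top ρ Q)] at hunion

section Allocation

variable {n : ℕ} {xbar : ℝ}

lemma ae_mem_laguerre_of_mem_weakLaguerre (μ : Fin n → Measure ℝ)
    [∀ j, SigmaFinite (μ j)] [∀ j, NullSingletonClass (μ j)]
    (hsupp : ∀ j, ∀ᵐ t ∂μ j, t ∈ Icc 0 xbar) (lam : Fin n → ℝ) :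
    ∀ᵐ x ∂Measure.pi μ, ∀ k, x ∈ weakLaguerre lam k → x ∈ laguerre xbar lam k := by
  have hbox : ∀ᵐ x ∂Measure.pi μ, ∀ j, x j ∈ Icc 0 xbar :=
    ae_all_iff.mpr fun j => Measure.tendsto_eval_ae_ae.eventually (hsupp j)
  have hnotie : ∀ᵐ x ∂Measure.pi μ, ∀ j k, j ≠ k → x k ≠ x j + (lam j - lam k) :=
    ae_all_iff.mpr fun j => ae_all_iff.mpr fun k => by
      rcases eq_or_ne j k with rfl | hjk
      · exact .of_forall fun _ h => (h rfl).elim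
      · filter_upwards [Measure.ae_pi_ne_add μ hjk (lam j - lam k)] with x hx using fun _ => hx
  filter_upwards [hbox, hnotie] with x hxbox hxtie k hk
  refine ⟨hxbox, fun j hjk => (hk j).lt_of_ne fun h => hxtie j k hjk ?_⟩
  linarith

lemma biUnion_laguerre_ae_eq_biUnion_weakLaguerre (μ : Fin n → Measure ℝ)
    [∀ j, SigmaFinite (μ j)] [∀ j, NullSingletonClass (μ j)]
    (hsupp : ∀ j, ∀ᵐ t ∂μ j, t ∈ Icc 0 xbar) (lam : Fin n → ℝ) (T : Finset (Fin n)) :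
    (⋃ k ∈ T, laguerre xbar lam k) =ᵐ[Measure.pi μ] ⋃ k ∈ T, weakLaguerre lam k := by
  refine (biUnion_mono subset_rfl fun k _ => laguerre_subset_weakLaguerre lam k :
    (⋃ k ∈ T, laguerre xbar lam k) ⊆ _).eventuallyLE.antisymm ?_
  filter_upwards [ae_mem_laguerre_of_mem_weakLaguerre μ hsupp lam] with x hx hxW
  obtain ⟨k, hk, hxk⟩ := mem_iUnion₂.mp hxW
  exact mem_iUnion₂.mpr ⟨k, hk, hx k hxk⟩

lemma ae_exists_mem_laguerre [NeZero n] (μ : Fin n → Measure ℝ)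
    [∀ j, SigmaFinite (μ j)] [∀ j, NullSingletonClass (μ j)]
    (hsupp : ∀ j, ∀ᵐ t ∂μ j, t ∈ Icc 0 xbar) (lam : Fin n → ℝ) :
    ∀ᵐ x ∂Measure.pi μ, ∃ k, x ∈ laguerre xbar lam k := by
  filter_upwards [ae_mem_laguerre_of_mem_weakLaguerre μ hsupp lam] with x hx
  obtain ⟨k, hk⟩ := exists_mem_weakLaguerre lam x
  exact ⟨k, hx k hk⟩

lemma pi_biUnion_laguerre_le_add {Δ : ℝ} (μ ν : Fin n → Measure ℝ)
    [∀ j, IsProbabilityMeasure (μ j)] [∀ j, IsProbabilityMeasure (ν j)]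
    [∀ j, NullSingletonClass (μ j)] [∀ j, NullSingletonClass (ν j)]
    (hμsupp : ∀ j, ∀ᵐ t ∂μ j, t ∈ Icc 0 xbar) (hνsupp : ∀ j, ∀ᵐ t ∂ν j, t ∈ Icc 0 xbar)
    (hclose : ∀ j x, |mcdf (μ j) x - mcdf (ν j) x| ≤ Δ) (lam : Fin n → ℝ) (T : Finset (Fin n)) :
    Measure.pi μ (⋃ k ∈ T, laguerre xbar lam k) ≤
      Measure.pi ν (⋃ k ∈ T, laguerre xbar lam k) + n * ENNReal.ofReal Δ := by
  rw [measure_congr (biUnion_laguerre_ae_eq_biUnion_weakLaguerre μ hμsupp lam T),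
    measure_congr (biUnion_laguerre_ae_eq_biUnion_weakLaguerre ν hνsupp lam T)]
  refine pi_le_pi_add_of_monotone_sections μ ν hclose
    (isClosed_biUnion_finset fun k _ => isClosed_weakLaguerre lam k).measurableSet fun i x => ?_
  by_cases hi : i ∈ T
  · exact .inr (isUpperSet_setOf_update_mem_biUnion_weakLaguerre lam hi x)
  · exact .inl (isLowerSet_setOf_update_mem_biUnion_weakLaguerre lam hi x)

lemma measure_biUnion_laguerre (ρ : Measure (Fin n → ℝ)) (lam : Fin n → ℝ)
    (T : Finset (Fin n)) :
    ρ (⋃ k ∈ T, laguerre xbar lam k) = ∑ k ∈ T, ρ (laguerre xbar lam k) :=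
  measure_biUnion_finset (fun _ _ _ _ hkk' => disjoint_laguerre lam hkk')
    fun k _ => measurableSet_laguerre lam k

lemma measure_biUnion_laguerre_eq_of_pAlloc_eq {ρ ρ' : Measure (Fin n → ℝ)} [IsFiniteMeasure ρ]
    [IsFiniteMeasure ρ'] {a b : Fin n → ℝ} (h : ∀ k, pAlloc xbar ρ a k = pAlloc xbar ρ' b k)
    (T : Finset (Fin n)) :
    ρ (⋃ k ∈ T, laguerre xbar a k) = ρ' (⋃ k ∈ T, laguerre xbar b k) := by
  rw [measure_biUnion_laguerre, measure_biUnion_laguerre]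
  exact Finset.sum_congr rfl fun k _ =>
    (ENNReal.toReal_eq_toReal_iff' (measure_ne_top _ _) (measure_ne_top _ _)).mp (h k)

lemma measure_laguerre_diff_le (ρ : Measure (Fin n → ℝ)) [IsFiniteMeasure ρ]
    {a b : Fin n → ℝ} {c : ℝ≥0∞} (hcover : ∀ᵐ x ∂ρ, ∃ k, x ∈ laguerre xbar b k)
    (h : ∀ T : Finset (Fin n),
      ρ (⋃ k ∈ T, laguerre xbar b k) ≤ ρ (⋃ k ∈ T, laguerre xbar a k) + c) (j : Fin n) :
    ρ (laguerre xbar a j \ laguerre xbar b j) ≤ c := by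
  classical
  set T := Finset.univ.filter fun k => b j - a j < b k - a k
  have hmemT : ∀ {k}, k ∈ T ↔ b j - a j < b k - a k := by simp [T]
  refine measure_le_of_ae_subset_of_disjoint ρ ?_ ?_ ?_
    (T.measurableSet_biUnion fun k _ => measurableSet_laguerre a k) (h T)
  · filter_upwards [hcover] with x hx hxX
    obtain ⟨k, hxk⟩ := hx
    have hjk : j ≠ k := fun h => hxX.2 (h ▸ hxk)
    exact mem_iUnion₂.mpr ⟨k, hmemT.mpr (sub_lt_sub_of_mem_laguerre hjk hxk hxX.1), hxk⟩
  · filter_upwards [hcover] with x hx hxQ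
    obtain ⟨k, hxk⟩ := hx
    obtain ⟨s, hs, hxs⟩ := mem_iUnion₂.mp hxQ
    refine mem_iUnion₂.mpr ⟨k, ?_, hxk⟩
    rcases eq_or_ne s k with rfl | hsk
    · exact hs
    · exact hmemT.mpr ((hmemT.mp hs).trans (sub_lt_sub_of_mem_laguerre hsk hxk hxs))
  · refine disjoint_left.mpr fun x hxX hxQ => ?_
    obtain ⟨s, hs, hxs⟩ := mem_iUnion₂.mp hxQ
    have hsj : s ≠ j := fun h => (h ▸ hmemT.mp hs).false
    exact disjoint_left.mp (disjoint_laguerre a hsj) hxs hxX.1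

end Allocation

theorem allocation_regions_close_general
    {n : ℕ} (xbar Δ : ℝ)
    (Fm Gm : Fin n → Measure ℝ)
    [∀ j, IsProbabilityMeasure (Fm j)] [∀ j, IsProbabilityMeasure (Gm j)]
    (hFsupp : ∀ j, Fm j (Set.Icc (0 : ℝ) xbar) = 1)
    (hGsupp : ∀ j, Gm j (Set.Icc (0 : ℝ) xbar) = 1)
    (hFcont : ∀ j, Continuous (mcdf (Fm j)))
    (hGcont : ∀ j, Continuous (mcdf (Gm j)))
    (hclose : ∀ j x, |mcdf (Fm j) x - mcdf (Gm j) x| ≤ Δ)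
    (pstar : Fin n → ℝ)
    (lam lamstar : Fin n → ℝ)
    (hlam : ∀ j, pAlloc xbar (Measure.pi Gm) lam j = pstar j)
    (hlamstar : ∀ j, pAlloc xbar (Measure.pi Fm) lamstar j = pstar j) :
    ∀ j, ((Measure.pi Fm) (laguerre xbar lamstar j \ laguerre xbar lam j)).toReal ≤ n * Δ ∧
      ((Measure.pi Fm) (laguerre xbar lam j \ laguerre xbar lamstar j)).toReal ≤ n * Δ := by
  intro j
  have : NeZero n := .of_pos j.pos
  have := fun k => nullSingletonClass_of_continuous_mcdf (Fm k) (hFcont k)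
  have := fun k => nullSingletonClass_of_continuous_mcdf (Gm k) (hGcont k)
  have hFae k := (mem_ae_iff_prob_eq_one measurableSet_Icc).mpr (hFsupp k)
  have hGae k := (mem_ae_iff_prob_eq_one measurableSet_Icc).mpr (hGsupp k)
  have hcells := measure_biUnion_laguerre_eq_of_pAlloc_eq fun k => (hlamstar k).trans (hlam k).symm
  have hFG := pi_biUnion_laguerre_le_add Fm Gm hFae hGae hclose lam
  have hGF := pi_biUnion_laguerre_le_add Gm Fm hGae hFae
    (fun k x => abs_sub_comm (mcdf (Gm k) x) _ ▸ hclose k x) lam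
  have htoReal (S : Set (Fin n → ℝ)) (hS : Measure.pi Fm S ≤ n * ENNReal.ofReal Δ) :
      (Measure.pi Fm S).toReal ≤ n * Δ := by
    have hΔ : 0 ≤ Δ := (abs_nonneg _).trans (hclose j 0)
    rw [← ENNReal.ofReal_natCast, ← ENNReal.ofReal_mul (Nat.cast_nonneg n)] at hS
    exact ENNReal.toReal_le_of_le_ofReal (by positivity) hS
  exact ⟨htoReal _ (measure_laguerre_diff_le _ (ae_exists_mem_laguerre Fm hFae lam)
      (fun T => (hFG T).trans_eq (by rw [hcells T])) j),
    htoReal _ (measure_laguerre_diff_le _ (ae_exists_mem_laguerre Fm hFae lamstar)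
      (fun T => (hcells T).trans_le (hGF T)) j)⟩

/-- If `G = G¹ ⊗ … ⊗ Gⁿ` and `F = F¹ ⊗ … ⊗ Fⁿ` are product distributions on `[0,x̄]^n` with
continuous marginal CDFs uniformly within `Δ` of each other, and `λ` (resp. `λ*`) achieves
the target fractions `p*` under `G` (resp. `F`), then for every `j`, the allocation regions
differ by `F`-probability at most `nΔ` in each direction:
`P_{X∼F}(X ∈ L_j(λ*) \ L_j(λ)) ≤ nΔ` and `P_{X∼F}(X ∈ L_j(λ) \ L_j(λ*)) ≤ nΔ`. -/
theorem allocation_regions_close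
    {n : ℕ} (xbar Δ : ℝ) (hxbar : 0 < xbar)
    (Fm Gm : Fin n → Measure ℝ)
    [∀ j, IsProbabilityMeasure (Fm j)] [∀ j, IsProbabilityMeasure (Gm j)]
    (hFsupp : ∀ j, Fm j (Set.Icc (0 : ℝ) xbar) = 1)
    (hGsupp : ∀ j, Gm j (Set.Icc (0 : ℝ) xbar) = 1)
    (hFcont : ∀ j, Continuous (mcdf (Fm j)))
    (hGcont : ∀ j, Continuous (mcdf (Gm j)))
    (hclose : ∀ j x, |mcdf (Fm j) x - mcdf (Gm j) x| ≤ Δ)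
    (pstar : Fin n → ℝ) (hpos : ∀ j, 0 < pstar j) (hsum : ∑ j, pstar j = 1)
    (lam lamstar : Fin n → ℝ)
    (hlam : ∀ j, pAlloc xbar (Measure.pi Gm) lam j = pstar j)
    (hlamstar : ∀ j, pAlloc xbar (Measure.pi Fm) lamstar j = pstar j) :
    ∀ j, ((Measure.pi Fm) (laguerre xbar lamstar j \ laguerre xbar lam j)).toReal ≤ n * Δ ∧
      ((Measure.pi Fm) (laguerre xbar lam j \ laguerre xbar lamstar j)).toReal ≤ n * Δ :=
  allocation_regions_close_general xbar Δ Fm Gm hFsupp hGsupp hFcont hGcont hclose pstar lam lamstar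
    hlam hlamstar
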